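/- Let k be a field, let p', p'' ∈ k⁴ be linearly independent, and let a', a'' ∈ k⁴ be linearly independent, defining the line L = {x ∈ P³ : a'·x = a''·x = 0} (where a·x denotes Σ_i a_i x_i). Then L and the line ⟨p',p''⟩ spanned by p' and p'' have nonempty intersection in P³ if and only if D(a',a'',p',p'') = 0, where D(a',a'',p',p'') = (a'·p')(a''·p'') − (a'·p'')(a''·p'). Moreover, D, regarded as a polynomial in the 16 indeterminates given by the coordinates of a', a'', p', p'' with coefficients in k, is an irreducible polynomial. -/

import Mathlib

/-!
A point `α p' + β p''` of `⟨p', p''⟩` lies on `L` exactly when `(α, β)` solves the `2 × 2`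
linear system with entries `a'·p', a'·p'', a''·p', a''·p''`, whose determinant is `D`.

For irreducibility, `D = Σᵢ a'ᵢ cᵢ` is linear in the coordinates of `a'`, with
`cᵢ = Σⱼ a''ⱼ (p'ᵢ p''ⱼ - p''ᵢ p'ⱼ)` free of `a'`, so it suffices that the `cᵢ` have no common
non-unit factor `r`. Over a domain `r` involves only variables of each nonzero multiple of it;
as `cᵢ` does not involve `a''ᵢ`, `r` is free of `a''`, and differentiating in `a''ⱼ` shows that
`r` divides every Plücker coordinate `p'ᵢ p''ⱼ - p''ᵢ p'ⱼ`. Two of them in disjoint variables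
force `r` to be a nonzero constant.
-/

open MvPolynomial

/-- The polynomial `a⁽ˢ⁾·p⁽ᵗ⁾ = Σ_i a⁽ˢ⁾_i p⁽ᵗ⁾_i` in the `16` indeterminates indexed by
`Fin 4 × Fin 4` (the first coordinate selecting one of the four vectors
`a', a'', p', p''`, in this order). -/
noncomputable def dotPoly (k : Type*) [CommRing k] (s t : Fin 4) :
    MvPolynomial (Fin 4 × Fin 4) k :=
  ∑ i : Fin 4, X (s, i) * X (t, i)

namespace MvPolynomial

variable {R σ ι : Type*}

theorem vars_subset_of_dvd [CommRing R] [IsDomain R] {r f : MvPolynomial σ R} (h : r ∣ f)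
    (hf : f ≠ 0) : r.vars ⊆ f.vars := by
  classical
  obtain ⟨q, rfl⟩ := h
  rw [vars_def, vars_def, degrees_mul_eq (left_ne_zero_of_mul hf) (right_ne_zero_of_mul hf),
    Multiset.toFinset_add]
  exact Finset.subset_union_left

theorem dvd_pderiv_of_notMem_vars [CommSemiring R] {i : σ} {r f : MvPolynomial σ R}
    (hr : i ∉ r.vars) (h : r ∣ f) : r ∣ pderiv i f := by
  obtain ⟨q, rfl⟩ := h
  rw [pderiv_mul, pderiv_eq_zero_of_notMem_vars hr, zero_mul, zero_add]
  exact dvd_mul_right r _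

theorem pderiv_sum_X_mul [CommSemiring R] [DecidableEq ι] {e : ι → σ} (he : e.Injective)
    {c : ι → MvPolynomial σ R} (hc : ∀ i j, e i ∉ (c j).vars) (s : Finset ι) (i : ι) :
    pderiv (e i) (∑ j ∈ s, X (e j) * c j) = if i ∈ s then c i else 0 := by
  classical
  simp [pderiv_X, pderiv_eq_zero_of_notMem_vars (hc _ _), Pi.single_apply,
    he.eq_iff, eq_comm]

theorem dvd_of_dvd_sum_X_mul [CommSemiring R] {e : ι → σ} (he : e.Injective)
    {c : ι → MvPolynomial σ R} (hc : ∀ i j, e i ∉ (c j).vars) {s : Finset ι}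
    {r : MvPolynomial σ R} (hr : ∀ i, e i ∉ r.vars) (h : r ∣ ∑ j ∈ s, X (e j) * c j)
    {i : ι} (hi : i ∈ s) : r ∣ c i := by
  classical
  simpa [pderiv_sum_X_mul he hc, hi] using dvd_pderiv_of_notMem_vars (hr i) h

theorem isUnit_of_dvd_of_disjoint_vars {k : Type*} [Field k] {r f g : MvPolynomial σ k}
    (hf : r ∣ f) (hg : r ∣ g) (hf0 : f ≠ 0) (hg0 : g ≠ 0) (hfg : Disjoint f.vars g.vars) :
    IsUnit r := by
  have hr0 : r ≠ 0 := by rintro rfl; exact hf0 (zero_dvd_iff.mp hf)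
  have : r ∈ supported k (∅ : Set σ) := by
    rw [mem_supported, Set.subset_empty_iff, Finset.coe_eq_empty, ← Finset.subset_empty]
    exact fun x hx => (Finset.disjoint_left.mp hfg (vars_subset_of_dvd hf hf0 hx)
      (vars_subset_of_dvd hg hg0 hx)).elim
  rw [supported_empty, Algebra.mem_bot] at this
  obtain ⟨a, rfl⟩ := this
  exact (isUnit_iff_ne_zero.mpr (by rintro rfl; exact hr0 (map_zero _))).map _

theorem irreducible_sum_X_mul [CommRing R] [IsDomain R] [Fintype ι] {e : ι → σ}
    (he : e.Injective) {c : ι → MvPolynomial σ R} (hc : ∀ i j, e i ∉ (c j).vars) {i₀ : ι}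
    (hi₀ : c i₀ ≠ 0) (hc_gcd : ∀ r, (∀ i, r ∣ c i) → IsUnit r) :
    Irreducible (∑ i, X (e i) * c i) := by
  classical
  rw [← Finset.add_sum_erase _ _ (Finset.mem_univ i₀), mul_comm]
  refine irreducible_mul_X_add _ _ _ hi₀ (hc _ _) ?_ fun r hr hrest => ?_
  · intro h
    obtain ⟨j, hj, hv⟩ := Finset.mem_biUnion.mp (vars_sum_subset _ _ h)
    rcases Finset.mem_union.mp (vars_mul _ _ hv) with hx | hx
    · rw [vars_X, Finset.mem_singleton, he.eq_iff] at hx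
      exact Finset.notMem_erase j _ (hx ▸ hj)
    · exact hc _ _ hx
  · have hr_vars : ∀ i, e i ∉ r.vars := fun i h => hc i i₀ (vars_subset_of_dvd hr hi₀ h)
    refine hc_gcd r fun i => ?_
    by_cases h : i = i₀
    · exact h ▸ hr
    · exact dvd_of_dvd_sum_X_mul he hc hr_vars hrest
        (Finset.mem_erase.mpr ⟨h, Finset.mem_univ _⟩)

end MvPolynomial

theorem exists_nontrivial_solution_two_by_two_iff {K : Type*} [Field K] (a b c d : K) :
    (∃ α β : K, ¬(α = 0 ∧ β = 0) ∧ a * α + b * β = 0 ∧ c * α + d * β = 0) ↔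
      a * d - b * c = 0 := by
  constructor
  · rintro ⟨α, β, hαβ, h₁, h₂⟩
    by_contra hdet
    refine hαβ ⟨?_, ?_⟩
    · exact (mul_eq_zero.mp (by linear_combination d * h₁ - b * h₂ :
        (a * d - b * c) * α = 0)).resolve_left hdet
    · exact (mul_eq_zero.mp (by linear_combination a * h₂ - c * h₁ :
        (a * d - b * c) * β = 0)).resolve_left hdet
  · intro hdet
    by_cases hab : a = 0 ∧ b = 0
    · by_cases hcd : c = 0 ∧ d = 0
      · exact ⟨1, 0, by simp, by simp [hab], by simp [hcd]⟩
      · exact ⟨d, -c, by rwa [neg_eq_zero, and_comm], by simp [hab], by ring⟩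
    · exact ⟨b, -a, by rwa [neg_eq_zero, and_comm], by ring, by linear_combination -hdet⟩

theorem sum_mul_add_mul {R ι : Type*} [CommSemiring R] [Fintype ι] (a p q : ι → R) (α β : R) :
    ∑ i, a i * (α * p i + β * q i) = (∑ i, a i * p i) * α + (∑ i, a i * q i) * β := by
  simp only [Finset.sum_mul, ← Finset.sum_add_distrib]
  exact Finset.sum_congr rfl fun _ _ => by ring

section
variable (k : Type*) [CommRing k]

/-- The Plücker coordinate `p'ᵢ p''ⱼ - p''ᵢ p'ⱼ` of the line `⟨p', p''⟩`. -/
noncomputable def plucker (i j : Fin 4) : MvPolynomial (Fin 4 × Fin 4) k :=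
  X (2, i) * X (3, j) - X (3, i) * X (2, j)

noncomputable def incidenceCoeff (i : Fin 4) : MvPolynomial (Fin 4 × Fin 4) k :=
  ∑ j, X (1, j) * plucker k i j

theorem dotPoly_sub_eq_sum_X_mul_incidenceCoeff :
    dotPoly k 0 2 * dotPoly k 1 3 - dotPoly k 0 3 * dotPoly k 1 2 =
      ∑ i, X (0, i) * incidenceCoeff k i := by
  simp only [dotPoly, incidenceCoeff, plucker, Fin.sum_univ_four]
  ring

variable {k}

theorem plucker_self (i : Fin 4) : plucker k i i = 0 := by
  rw [plucker, mul_comm, sub_self]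

variable [Nontrivial k]

theorem plucker_mem_supported (i j : Fin 4) :
    plucker k i j ∈ supported k {v | (v.1 = 2 ∨ v.1 = 3) ∧ (v.2 = i ∨ v.2 = j)} := by
  unfold plucker
  apply_rules [Subalgebra.sub_mem, Subalgebra.mul_mem, X_mem_supported.mpr] <;> simp

theorem incidenceCoeff_mem_supported (i : Fin 4) :
    incidenceCoeff k i ∈ supported k {v | v.1 ≠ 0 ∧ v ≠ (1, i)} := by
  refine Subalgebra.sum_mem _ fun j _ => ?_
  rcases eq_or_ne j i with rfl | hji
  · rw [plucker_self, mul_zero]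
    exact Subalgebra.zero_mem _
  · refine Subalgebra.mul_mem _ (X_mem_supported.mpr (by simp [hji]))
      (supported_mono ?_ (plucker_mem_supported i j))
    rintro ⟨a, b⟩ ⟨ha | ha, -⟩ <;> simp_all

theorem row_one_notMem_vars_plucker (i j l : Fin 4) :
    ((1 : Fin 4), j) ∉ (plucker k i l).vars := fun hv => by
  simpa using (mem_supported.mp (plucker_mem_supported i l) hv).1

theorem plucker_ne_zero {i j : Fin 4} (hij : i ≠ j) : plucker k i j ≠ 0 := by
  intro h
  have := congrArg (pderiv (3, j)) h
  simp [plucker, pderiv_X, hij] at this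

theorem incidenceCoeff_ne_zero (i : Fin 4) : incidenceCoeff k i ≠ 0 := by
  obtain ⟨j, hji⟩ := exists_ne i
  intro h
  have := pderiv_sum_X_mul (Prod.mk_right_injective 1) (row_one_notMem_vars_plucker (k := k) i)
    Finset.univ j
  rw [← incidenceCoeff, h, map_zero, if_pos (Finset.mem_univ j)] at this
  exact plucker_ne_zero hji.symm this.symm

end

section
variable {k : Type*} [Field k]

theorem isUnit_of_forall_dvd_incidenceCoeff {r : MvPolynomial (Fin 4 × Fin 4) k}
    (h : ∀ i, r ∣ incidenceCoeff k i) : IsUnit r := by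
  have hr_vars : ∀ i, (1, i) ∉ r.vars := fun i hv =>
    (mem_supported.mp (incidenceCoeff_mem_supported i)
      (vars_subset_of_dvd (h i) (incidenceCoeff_ne_zero i) hv)).2 rfl
  have h_plucker : ∀ i j, r ∣ plucker k i j := fun i j =>
    dvd_of_dvd_sum_X_mul (Prod.mk_right_injective 1) (row_one_notMem_vars_plucker (k := k) i)
      hr_vars (h i) (Finset.mem_univ j)
  refine isUnit_of_dvd_of_disjoint_vars (h_plucker 0 1) (h_plucker 2 3)
    (plucker_ne_zero (by decide)) (plucker_ne_zero (by decide)) ?_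
  refine Finset.disjoint_left.mpr fun v h01 h23 => ?_
  have := (mem_supported.mp (plucker_mem_supported 0 1) h01).2
  have := (mem_supported.mp (plucker_mem_supported 2 3) h23).2
  grind

theorem irreducible_dotPoly_sub :
    Irreducible (dotPoly k 0 2 * dotPoly k 1 3 - dotPoly k 0 3 * dotPoly k 1 2) := by
  rw [dotPoly_sub_eq_sum_X_mul_incidenceCoeff]
  refine irreducible_sum_X_mul (Prod.mk_right_injective 0) (fun i j hv => ?_)
    (incidenceCoeff_ne_zero 0) fun r => isUnit_of_forall_dvd_incidenceCoeff
  simpa using (mem_supported.mp (incidenceCoeff_mem_supported j) hv).1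

end

theorem statement_19_general (k : Type*) [Field k]
    (p' p'' a' a'' : Fin 4 → k) :
    ((∃ α β : k, ¬(α = 0 ∧ β = 0) ∧
        (∑ i, a' i * (α * p' i + β * p'' i)) = 0 ∧
        (∑ i, a'' i * (α * p' i + β * p'' i)) = 0) ↔
      (∑ i, a' i * p' i) * (∑ i, a'' i * p'' i) -
        (∑ i, a' i * p'' i) * (∑ i, a'' i * p' i) = 0) ∧
    Irreducible
      (dotPoly k 0 2 * dotPoly k 1 3 - dotPoly k 0 3 * dotPoly k 1 2) := by
  refine ⟨?_, irreducible_dotPoly_sub⟩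
  simp only [sum_mul_add_mul]
  exact exists_nontrivial_solution_two_by_two_iff _ _ _ _

/-- Let `p', p''` and `a', a''` be two pairs of linearly independent
vectors of `k⁴`, the latter defining the line `L = {x : a'·x = a''·x = 0} ⊂ P³`. The lines
`L` and `⟨p', p''⟩` meet in `P³` if and only if
`D = (a'·p')(a''·p'') − (a'·p'')(a''·p') = 0`; moreover `D`, as a polynomial in the `16`
coordinates of `a', a'', p', p''` with coefficients in `k`, is irreducible. -/
theorem statement_19 (k : Type*) [Field k]
    (p' p'' a' a'' : Fin 4 → k)
    (hp : LinearIndependent k ![p', p'']) (ha : LinearIndependent k ![a', a'']) :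
    ((∃ α β : k, ¬(α = 0 ∧ β = 0) ∧
        (∑ i, a' i * (α * p' i + β * p'' i)) = 0 ∧
        (∑ i, a'' i * (α * p' i + β * p'' i)) = 0) ↔
      (∑ i, a' i * p' i) * (∑ i, a'' i * p'' i) -
        (∑ i, a' i * p'' i) * (∑ i, a'' i * p' i) = 0) ∧
    Irreducible
      (dotPoly k 0 2 * dotPoly k 1 3 - dotPoly k 0 3 * dotPoly k 1 2) :=
  statement_19_general k p' p'' a' a''
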